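/- arXiv:2303.01074 — 2 statements merged into one kernel-verified Lean document; each statement's English description precedes it below -/
import Mathlib

section
/- Let A be a nonempty finite action set. For every horizon T, every prediction sequence p^1, …, p^T ∈ ℝ^A and every reward sequence x^1, …, x^T ∈ ℝ^A, the external regret of predictive regret matching satisfies max_{a∈A} R^T_a ≤ √2 · ( Σ_{t=1}^T ‖r(σ^t, x^t) − p^t‖₂² )^{1/2}, where σ^t are the PRM iterates and ‖·‖₂ denotes the Euclidean norm on ℝ^A. (The PRM regret bound of Farina et al., Theorem 3, used in the proof of Theorem 1.) -/
open Finset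

/-- Instantaneous regret vector: `r(σ, x)_a = x_a − ⟨σ, x⟩`. -/
noncomputable def instRegret {A : Type*} [Fintype A] (σ x : A → ℝ) : A → ℝ :=
  fun a => x a - ∑ b, σ b * x b

/-- Strategy obtained by normalizing a nonnegative vector `ξ`; uniform if `ξ = 0`. -/
noncomputable def stratOf {A : Type*} [Fintype A] (ξ : A → ℝ) : A → ℝ :=
  if 0 < ∑ a, ξ a then fun a => ξ a / ∑ b, ξ b
  else fun _ => (Fintype.card A : ℝ)⁻¹

/-- PRM strategy from previous cumulative regret `R` and current prediction `pt`:
`σ = [R + p]⁺ / ‖[R + p]⁺‖₁` (uniform if the positive part vanishes). -/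
noncomputable def prmSigmaAux {A : Type*} [Fintype A] (pt R : A → ℝ) : A → ℝ :=
  stratOf (fun a => max (R a + pt a) 0)

/-- PRM cumulative regret: `R^0 = 0`, `R^t = R^{t−1} + r(σ^t, x^t)`. -/
noncomputable def prmR {A : Type*} [Fintype A] (p x : ℕ → A → ℝ) : ℕ → A → ℝ
  | 0 => fun _ => 0
  | t + 1 => fun a =>
      prmR p x t a + instRegret (prmSigmaAux (p (t + 1)) (prmR p x t)) (x (t + 1)) a

/-- PRM strategy at step `t ≥ 1`. -/
noncomputable def prmSigma {A : Type*} [Fintype A] (p x : ℕ → A → ℝ) (t : ℕ) : A → ℝ :=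
  prmSigmaAux (p t) (prmR p x (t - 1))

/-! With `Φ(R) = Σ_a ([R_a]⁺)²`, one PRM step raises the potential by at most
`‖r(σ^t, x^t) − p^t‖₂²`: the new regret `r = r(σ^t, x^t)` is orthogonal to `ξ^t = [R^{t−1} + p^t]⁺`
(it is orthogonal to every multiple of `σ^t`), and coordinatewise
`([u + r]⁺)² ≤ ([u]⁺)² + (r − q)² + 2 [u + q]⁺ r`. Summing over `t` bounds `Φ(R^T)`, and
`max_a R^T_a ≤ √Φ(R^T)`. -/

lemma sq_max_add_le (u q r : ℝ) :
    max (u + r) 0 ^ 2 ≤ max u 0 ^ 2 + (r - q) ^ 2 + 2 * max (u + q) 0 * r := by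
  set ξ := max (u + q) 0
  have h_shift : max (u + r) 0 ^ 2 ≤ (ξ + (r - q)) ^ 2 := by
    rcases le_or_gt (u + r) 0 with h | h
    · rw [max_eq_right h]; simpa using sq_nonneg _
    · rw [max_eq_left h.le]
      exact pow_le_pow_left₀ h.le (by linarith [le_max_left (u + q) 0]) 2
  have h_drop : ξ ^ 2 - 2 * ξ * q ≤ max u 0 ^ 2 := by
    rcases le_or_gt (u + q) 0 with h | h
    · simp [ξ, max_eq_right h]
    · simp only [ξ, max_eq_left h.le]
      rcases le_or_gt u 0 with hu | hu
      · rw [max_eq_right hu]; nlinarith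
      · rw [max_eq_left hu.le]; nlinarith [sq_nonneg q]
  nlinarith

lemma sum_mul_stratOf {A : Type*} [Fintype A] {ξ : A → ℝ} (hξ : ∀ a, 0 ≤ ξ a) (a : A) :
    (∑ b, ξ b) * stratOf ξ a = ξ a := by
  unfold stratOf
  split_ifs with h
  · field_simp
  · have h_zero := (Finset.sum_eq_zero_iff_of_nonneg fun b _ => hξ b).mp
      (le_antisymm (not_lt.mp h) (Finset.sum_nonneg fun b _ => hξ b))
    simp [h_zero a (Finset.mem_univ a), Finset.sum_eq_zero h_zero]

lemma sum_mul_instRegret_stratOf {A : Type*} [Fintype A] {ξ : A → ℝ} (hξ : ∀ a, 0 ≤ ξ a)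
    (x : A → ℝ) : ∑ a, ξ a * instRegret (stratOf ξ) x a = 0 := by
  have h_mean : (∑ a, ξ a) * ∑ b, stratOf ξ b * x b = ∑ b, ξ b * x b := by
    simp only [Finset.mul_sum, ← mul_assoc, sum_mul_stratOf hξ]
  simp only [instRegret, mul_sub, Finset.sum_sub_distrib, ← Finset.sum_mul, h_mean, sub_self]

noncomputable def regretPotential {A : Type*} [Fintype A] (R : A → ℝ) : ℝ :=
  ∑ a, max (R a) 0 ^ 2

lemma le_sqrt_regretPotential {A : Type*} [Fintype A] (R : A → ℝ) (a : A) :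
    R a ≤ Real.sqrt (regretPotential R) :=
  calc R a ≤ max (R a) 0 := le_max_left _ _
    _ = Real.sqrt (max (R a) 0 ^ 2) := (Real.sqrt_sq (le_max_right _ _)).symm
    _ ≤ Real.sqrt (regretPotential R) := Real.sqrt_le_sqrt <|
      Finset.single_le_sum (f := fun b => max (R b) 0 ^ 2) (fun _ _ => sq_nonneg _)
        (Finset.mem_univ a)

lemma regretPotential_add_instRegret_le {A : Type*} [Fintype A] (pt x R : A → ℝ) :
    regretPotential (fun a => R a + instRegret (prmSigmaAux pt R) x a) ≤
      regretPotential R + ∑ a, (instRegret (prmSigmaAux pt R) x a - pt a) ^ 2 := by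
  set r := instRegret (prmSigmaAux pt R) x
  have h_orth : ∑ a, max (R a + pt a) 0 * r a = 0 :=
    sum_mul_instRegret_stratOf (fun a => le_max_right _ _) x
  calc regretPotential (fun a => R a + r a)
      ≤ ∑ a, (max (R a) 0 ^ 2 + (r a - pt a) ^ 2 + 2 * (max (R a + pt a) 0 * r a)) :=
        Finset.sum_le_sum fun a _ => by linarith [sq_max_add_le (R a) (pt a) (r a)]
    _ = regretPotential R + ∑ a, (r a - pt a) ^ 2 := by
        rw [Finset.sum_add_distrib, Finset.sum_add_distrib, ← Finset.mul_sum, h_orth,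
          mul_zero, add_zero, regretPotential]

lemma regretPotential_prmR_le {A : Type*} [Fintype A] (p x : ℕ → A → ℝ) (T : ℕ) :
    regretPotential (prmR p x T) ≤
      ∑ t ∈ Finset.Icc 1 T, ∑ a, (instRegret (prmSigma p x t) (x t) a - p t a) ^ 2 := by
  induction T with
  | zero => simp [regretPotential, prmR]
  | succ T ih =>
    rw [Finset.sum_Icc_succ_top (by omega)]
    calc regretPotential (prmR p x (T + 1))
        ≤ regretPotential (prmR p x T) +
            ∑ a, (instRegret (prmSigma p x (T + 1)) (x (T + 1)) a - p (T + 1) a) ^ 2 :=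
          regretPotential_add_instRegret_le (p (T + 1)) (x (T + 1)) (prmR p x T)
      _ ≤ _ := by gcongr

/-- **PRM regret bound (Farina et al., Thm 3).** For every horizon `T` and arbitrary
prediction and reward sequences, the external regret of PRM satisfies
`max_a R^T_a ≤ √2 · (Σ_{t=1}^T ‖r(σ^t, x^t) − p^t‖₂²)^{1/2}`. -/
theorem prm_regret_bound_predictions
    {A : Type*} [Fintype A] [Nonempty A]
    (T : ℕ) (p x : ℕ → A → ℝ) :
    Finset.univ.sup' Finset.univ_nonempty (fun a => prmR p x T a) ≤
      Real.sqrt 2 *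
        Real.sqrt (∑ t ∈ Finset.Icc 1 T,
          ∑ a, (instRegret (prmSigma p x t) (x t) a - p t a) ^ 2) := by
  refine Finset.sup'_le _ _ fun a _ => ?_
  calc prmR p x T a
      ≤ Real.sqrt (regretPotential (prmR p x T)) := le_sqrt_regretPotential _ a
    _ ≤ Real.sqrt (∑ t ∈ Finset.Icc 1 T,
          ∑ a, (instRegret (prmSigma p x t) (x t) a - p t a) ^ 2) :=
        Real.sqrt_le_sqrt (regretPotential_prmR_le p x T)
    _ ≤ _ := le_mul_of_one_le_left (Real.sqrt_nonneg _) (by simp [Real.one_le_sqrt])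
end

section
/- Let A be a nonempty finite action set and consider predictive regret matching run against an arbitrary reward sequence x^1, …, x^T ∈ ℝ^A. If the predictions are perfect, i.e., p^t = r(σ^t, x^t) for every t = 1, …, T (the prediction made at step t equals the instantaneous regret actually incurred at step t), then the external regret is nonpositive: max_{a∈A} R^T_a ≤ 0. (The paper's claim that a perfect prediction results in zero regret, a consequence of the PRM regret bound.) -/
open Finset

/-! With perfect predictions, `σ^t` is the normalization of `ξ = [R^{t-1} + r^t]⁺` where
`r^t = r(σ^t, x^t)`, and a strategy proportional to `ξ` has no regret against `ξ`:
`⟨ξ, r^t⟩ = 0`. If `R^{t-1} ≤ 0`, then `‖[R^t]⁺‖² = ⟨[R^t]⁺, R^{t-1} + r^t⟩ ≤ ⟨ξ, r^t⟩ = 0`,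
so `R^t ≤ 0`, and induction on `t` gives `R^T ≤ 0`. -/

section

variable {A : Type*} [Fintype A]

lemma sum_mul_instRegret_stratOf_eq_zero {ξ : A → ℝ} (hξ : ∀ a, 0 ≤ ξ a) (x : A → ℝ) :
    ∑ a, ξ a * instRegret (stratOf ξ) x a = 0 := by
  rcases (Finset.sum_nonneg fun a _ => hξ a).lt_or_eq with hS | hS
  · have hS' : (∑ a, ξ a) ≠ 0 := hS.ne'
    simp only [instRegret, stratOf, if_pos hS, mul_sub, Finset.sum_sub_distrib,
      ← Finset.sum_mul, div_mul_eq_mul_div, ← Finset.sum_div]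
    field_simp
    ring
  · have hξ0 : ∀ a, ξ a = 0 := fun a =>
      (Finset.sum_eq_zero_iff_of_nonneg fun b _ => hξ b).mp hS.symm a (Finset.mem_univ a)
    simp [hξ0]

lemma add_le_zero_of_sum_max_mul_eq_zero {R r : A → ℝ} (hR : ∀ a, R a ≤ 0)
    (h : ∑ a, max (R a + r a) 0 * r a = 0) (a : A) : R a + r a ≤ 0 := by
  have hterm : ∀ b, max (R b + r b) 0 ^ 2 ≤ max (R b + r b) 0 * r b := fun b => by
    calc max (R b + r b) 0 ^ 2 = max (R b + r b) 0 * (R b + r b) := by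
          rcases le_total (R b + r b) 0 with hb | hb
          · simp [max_eq_right hb]
          · rw [max_eq_left hb, sq]
      _ ≤ max (R b + r b) 0 * r b :=
          mul_le_mul_of_nonneg_left (by linarith [hR b]) (le_max_right _ _)
  have hsq : ∑ b, max (R b + r b) 0 ^ 2 = 0 :=
    le_antisymm ((Finset.sum_le_sum fun b _ => hterm b).trans h.le)
      (Finset.sum_nonneg fun b _ => sq_nonneg _)
  have ha := (Finset.sum_eq_zero_iff_of_nonneg fun b _ => sq_nonneg (max (R b + r b) 0)).mp
    hsq a (Finset.mem_univ a)
  exact max_eq_right_iff.mp (pow_eq_zero_iff two_ne_zero |>.mp ha)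

lemma prmR_succ (p x : ℕ → A → ℝ) (t : ℕ) (a : A) :
    prmR p x (t + 1) a = prmR p x t a + instRegret (prmSigma p x (t + 1)) (x (t + 1)) a :=
  rfl

lemma prmR_succ_le_zero {p x : ℕ → A → ℝ} {t : ℕ} (hR : ∀ a, prmR p x t a ≤ 0)
    (hp : p (t + 1) = instRegret (prmSigma p x (t + 1)) (x (t + 1))) (a : A) :
    prmR p x (t + 1) a ≤ 0 := by
  set r := instRegret (prmSigma p x (t + 1)) (x (t + 1))
  have hσ : prmSigma p x (t + 1) = stratOf fun b => max (prmR p x t b + r b) 0 := by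
    rw [← hp]; rfl
  have hξr : ∑ b, max (prmR p x t b + r b) 0 * r b = 0 := by
    have := sum_mul_instRegret_stratOf_eq_zero
      (fun b => le_max_right (prmR p x t b + r b) 0) (x (t + 1))
    rwa [← hσ] at this
  rw [prmR_succ]
  exact add_le_zero_of_sum_max_mul_eq_zero hR hξr a

end

/-- If the PRM predictions are perfect, i.e. `p^t = r(σ^t, x^t)` for all
`t = 1, …, T`, then the external regret is nonpositive. -/
theorem prm_perfect_prediction_zero_regret
    {A : Type*} [Fintype A] [Nonempty A]
    (T : ℕ) (p x : ℕ → A → ℝ)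
    (hp : ∀ t, 1 ≤ t → t ≤ T → p t = instRegret (prmSigma p x t) (x t)) :
    Finset.univ.sup' Finset.univ_nonempty (fun a => prmR p x T a) ≤ 0 := by
  have hR : ∀ t ≤ T, ∀ a, prmR p x t a ≤ 0 := by
    intro t
    induction t with
    | zero => exact fun _ _ => le_rfl
    | succ t ih =>
      intro ht
      exact prmR_succ_le_zero (ih (by omega)) (hp (t + 1) (by omega) ht)
  exact Finset.sup'_le _ _ fun a _ => hR T le_rfl a
end
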